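/- For every real C > −3 there is a constant K = K(C) > 0 such that for all λ > 0 and all z = x + iy with −3 < x ≤ C and |y| ≥ 1, one has |M^λ(z)| ≤ K · λ^x · (|y| + 1)^{−x − 7/2}, where M^λ(z) = (2λ^z/π) · Γ(−z−3) · sin(πz/2) · (12 − 6·2^{−z}). -/

import Mathlib

/-- The meromorphic formula `(2λ^z/π) Γ(-z-3) sin(πz/2) (12 - 6·2^{-z})` for the Mellin
transform `M^λ`. -/
noncomputable def Mform (lam : ℝ) (z : ℂ) : ℂ :=
  (2 * (lam : ℂ) ^ z / (Real.pi : ℂ)) * Complex.Gamma (-z - 3) *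
    Complex.sin (Real.pi * z / 2) * (12 - 6 * (2 : ℂ) ^ (-z))

/-!
The factors `2 λ^z / π` and `12 - 6 · 2^{-z}` contribute `λ^x` and a bounded factor, so everything
rests on `‖Γ(-z-3) sin(πz/2)‖ ≪ (1 + |y|)^{-x-7/2}`. We compare `Γ(-z-3)` with `Γ(1/2 - iy)`:
the reflection formula gives `|Γ(1/2 + iτ)|² = π / cosh πτ`, and
`|sin(πz/2)| ≤ cosh(πy/2) ≤ √(cosh πy)`.

The comparison `|Γ(σ + iτ)| ≪ (1 + |τ|)^{σ - σ'} |Γ(σ' + iτ)|`, for `σ ≤ σ'` in a compact range and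
`|τ| ≥ 1/2`, is assembled from shifts. A unit shift of `σ` multiplies `|Γ|` by `|σ + iτ| ≍ 1 + |τ|`.
A fractional shift by `δ ∈ (0, 1)` from real part `≥ 1` is controlled through
`Γ(c) Γ(δ) = Γ(c + δ) B(c, δ)` and `|B(c, δ)| ≤ 7 δ⁻¹ (1 + |Im c|)^{-δ}`; the latter follows by
splitting the Beta integral at `1 / (1 + |Im c|)` and integrating the oscillating factor by parts on
the long piece.
-/

open Complex Set MeasureTheory intervalIntegral
open scoped Real

lemma norm_ofReal_cpow_le_one {x : ℝ} (hx₀ : 0 ≤ x) (hx₁ : x ≤ 1) {w : ℂ} (hw : 0 ≤ w.re) :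
    ‖(x : ℂ) ^ w‖ ≤ 1 := by
  have h := norm_cpow_le (x : ℂ) w
  rw [arg_ofReal_of_nonneg hx₀, zero_mul, Real.exp_zero, div_one, norm_real,
    Real.norm_of_nonneg hx₀] at h
  exact h.trans (Real.rpow_le_one hx₀ hx₁ hw)

-- the integrand of `Complex.betaIntegral u v` over `[0, 1]`
noncomputable def betaIntegrand (u v : ℂ) (t : ℝ) : ℂ := (t : ℂ) ^ (u - 1) * (1 - (t : ℂ)) ^ (v - 1)

section Beta

variable {δ : ℝ} {c : ℂ}

lemma norm_integral_betaIntegrand_le_left (hδ : 0 < δ) (hc : 1 ≤ c.re) {η : ℝ} (hη₀ : 0 ≤ η)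
    (hη₁ : η < 1) :
    ‖∫ t in (0 : ℝ)..η, betaIntegrand δ c t‖ ≤ η ^ δ / δ := by
  have hint : ∫ t in (0 : ℝ)..η, t ^ (δ - 1) = η ^ δ / δ := by
    rw [integral_rpow (Or.inl (by linarith)), sub_add_cancel, Real.zero_rpow hδ.ne', sub_zero]
  rw [← hint]
  refine norm_integral_le_of_norm_le hη₀ (Filter.Eventually.of_forall fun t ht => ?_)
    (intervalIntegrable_rpow' (by linarith))
  rw [betaIntegrand, norm_mul, norm_cpow_eq_rpow_re_of_pos ht.1,
    show (1 : ℂ) - t = ((1 - t : ℝ) : ℂ) by simp]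
  have : ‖((1 - t : ℝ) : ℂ) ^ (c - 1)‖ ≤ 1 :=
    norm_ofReal_cpow_le_one (by linarith [ht.2]) (by linarith [ht.1]) (by simpa using hc)
  simpa using mul_le_of_le_one_right (Real.rpow_nonneg ht.1.le _) this

lemma hasDerivAt_neg_cpow_mul_one_sub_cpow_div (hc : c ≠ 0) {t : ℝ} (ht₀ : 0 < t) (ht₁ : t < 1) :
    HasDerivAt (fun t : ℝ => -((t : ℂ) ^ ((δ : ℂ) - 1) * (1 - (t : ℂ)) ^ c) / c)
      (betaIntegrand δ c t - ((δ : ℂ) - 1) / c * ((t : ℂ) ^ ((δ : ℂ) - 2) * (1 - (t : ℂ)) ^ c))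
      t := by
  have h₁ := (hasDerivAt_id (t : ℂ)).cpow_const (c := (δ : ℂ) - 1) (ofReal_mem_slitPlane.2 ht₀)
  have h₂ : HasDerivAt (fun s : ℂ => (1 - s) ^ c) (c * (1 - (t : ℂ)) ^ (c - 1) * (-1)) t := by
    refine ((hasDerivAt_id (t : ℂ)).const_sub 1).cpow_const ?_
    simpa using ofReal_mem_slitPlane.2 (sub_pos.2 ht₁)
  refine ((h₁.mul h₂).neg.div_const c).comp_ofReal.congr_deriv ?_
  rw [id, betaIntegrand, show (δ : ℂ) - 1 - 1 = δ - 2 by ring]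
  field_simp
  ring

lemma integral_betaIntegrand_eq_add_integral (hδ : 0 < δ) (hc : 0 < c.re) {η : ℝ} (hη₀ : 0 < η)
    (hη₁ : η < 1) :
    ∫ t in η..1, betaIntegrand δ c t = (η : ℂ) ^ ((δ : ℂ) - 1) * (1 - (η : ℂ)) ^ c / c +
      ((δ : ℂ) - 1) / c * ∫ t in η..1, (t : ℂ) ^ ((δ : ℂ) - 2) * (1 - (t : ℂ)) ^ c := by
  have hc₀ : c ≠ 0 := by rintro rfl; simp at hc
  have hf : IntervalIntegrable (betaIntegrand δ c) volume η 1 :=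
    (betaIntegral_convergent (u := δ) (v := c) (by simpa using hδ) hc).mono_set
      (uIcc_subset_uIcc (by simp [hη₀.le, hη₁.le]) (by simp))
  have hcont : ∀ w : ℂ, ContinuousOn (fun t : ℝ => (t : ℂ) ^ w * (1 - (t : ℂ)) ^ c) (Icc η 1) := by
    intro w t ht
    refine ((continuousAt_ofReal_cpow_const t w (Or.inr (by linarith [ht.1]))).mul ?_)
      |>.continuousWithinAt
    exact (continuousAt_cpow_const_of_re_pos (by simp [ht.2]) hc).comp (by fun_prop)
  have hg := ((hcont ((δ : ℂ) - 2)).intervalIntegrable_of_Icc (μ := volume)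
    hη₁.le).const_mul (((δ : ℂ) - 1) / c)
  have hFTC := integral_eq_sub_of_hasDerivAt_of_le hη₁.le ((hcont _).neg.div_const c)
    (fun t ht => hasDerivAt_neg_cpow_mul_one_sub_cpow_div hc₀ (hη₀.trans ht.1) ht.2) (hf.sub hg)
  rw [integral_sub hf hg, intervalIntegral.integral_const_mul] at hFTC
  simp only [Pi.neg_apply, ofReal_one, sub_self, zero_cpow hc₀, mul_zero, neg_zero, zero_div,
    zero_sub] at hFTC
  rw [sub_eq_iff_eq_add.mp hFTC, neg_div, neg_neg]

lemma norm_integral_cpow_mul_one_sub_cpow_le (hδ : δ < 1) (hc : 0 ≤ c.re) {η : ℝ} (hη₀ : 0 < η)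
    (hη₁ : η < 1) :
    ‖∫ t in η..1, (t : ℂ) ^ ((δ : ℂ) - 2) * (1 - (t : ℂ)) ^ c‖ ≤ (η ^ (δ - 1) - 1) / (1 - δ) := by
  have hint : ∫ t in η..1, t ^ (δ - 2) = (η ^ (δ - 1) - 1) / (1 - δ) := by
    rw [integral_rpow (Or.inr ⟨by linarith, by simp [hη₀, hη₁.le]⟩), Real.one_rpow,
      show δ - 2 + 1 = δ - 1 by ring, div_eq_div_iff (by linarith) (by linarith)]
    ring
  rw [← hint]
  refine norm_integral_le_of_norm_le hη₁.le (Filter.Eventually.of_forall fun t ht => ?_)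
    (intervalIntegrable_rpow (Or.inr (by simp [hη₀, hη₁.le])))
  have ht₀ : 0 < t := hη₀.trans ht.1
  rw [norm_mul, norm_cpow_eq_rpow_re_of_pos ht₀, show (1 : ℂ) - t = ((1 - t : ℝ) : ℂ) by simp]
  refine (mul_le_of_le_one_right (Real.rpow_nonneg ht₀.le _) ?_).trans_eq (by simp)
  exact norm_ofReal_cpow_le_one (by linarith [ht.2]) (by linarith) hc

lemma norm_integral_betaIntegrand_le_right (hδ₀ : 0 < δ) (hδ₁ : δ < 1) (hc : 1 ≤ c.re) {η : ℝ}
    (hη₀ : 0 < η) (hη₁ : η < 1) :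
    ‖∫ t in η..1, betaIntegrand δ c t‖ ≤ 2 * η ^ (δ - 1) / ‖c‖ := by
  -- integrating the oscillating factor `(1 - t) ^ (c - 1)` by parts gains the factor `1 / ‖c‖`
  rw [integral_betaIntegrand_eq_add_integral hδ₀ (by linarith) hη₀ hη₁]
  have hboundary : ‖(η : ℂ) ^ ((δ : ℂ) - 1) * (1 - (η : ℂ)) ^ c / c‖ ≤ η ^ (δ - 1) / ‖c‖ := by
    rw [norm_div, norm_mul, norm_cpow_eq_rpow_re_of_pos hη₀,
      show (1 : ℂ) - η = ((1 - η : ℝ) : ℂ) by simp]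
    gcongr
    refine (mul_le_of_le_one_right (Real.rpow_nonneg hη₀.le _) ?_).trans_eq (by simp)
    exact norm_ofReal_cpow_le_one (by linarith) (by linarith) (by linarith)
  have hfactor : ‖((δ : ℂ) - 1) / c‖ = (1 - δ) / ‖c‖ := by
    rw [norm_div, ← ofReal_one, ← ofReal_sub, norm_real, Real.norm_of_nonpos (by linarith)]
    ring
  calc _ ≤ _ := norm_add_le _ _
    _ ≤ η ^ (δ - 1) / ‖c‖ + (1 - δ) / ‖c‖ * ((η ^ (δ - 1) - 1) / (1 - δ)) := by
        rw [norm_mul, hfactor]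
        gcongr
        exact norm_integral_cpow_mul_one_sub_cpow_le hδ₁ (by linarith) hη₀ hη₁
    _ ≤ 2 * η ^ (δ - 1) / ‖c‖ := by
        have : 1 - δ ≠ 0 := by linarith
        field_simp
        gcongr
        linarith

lemma norm_betaIntegral_le (hδ₀ : 0 < δ) (hδ₁ : δ < 1) (hc : 1 ≤ c.re) (hc' : 1 / 2 ≤ |c.im|) :
    ‖betaIntegral c δ‖ ≤ 7 / δ * (1 + |c.im|) ^ (-δ) := by
  set A := 1 + |c.im|
  have hA : 0 < A := by positivity
  have hη₁ : A⁻¹ < 1 := inv_lt_one_of_one_lt₀ (by linarith)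
  have hint : IntervalIntegrable (betaIntegrand δ c) volume 0 1 :=
    betaIntegral_convergent (by simpa using hδ₀) (by linarith)
  have hsub : ∀ a b : ℝ, a ∈ Icc (0 : ℝ) 1 → b ∈ Icc (0 : ℝ) 1 → uIcc a b ⊆ uIcc 0 1 :=
    fun a b ha hb => uIcc_subset_uIcc (by simpa [uIcc_of_le zero_le_one] using ha)
      (by simpa [uIcc_of_le zero_le_one] using hb)
  -- splitting `B(δ, c)` at `1 / (1 + |Im c|)` balances the two bounds below
  rw [← betaIntegral_symm, show betaIntegral δ c = ∫ t in (0 : ℝ)..1, betaIntegrand δ c t from rfl,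
    ← integral_add_adjacent_intervals
      (hint.mono_set (hsub 0 A⁻¹ (by simp) ⟨by positivity, hη₁.le⟩))
      (hint.mono_set (hsub A⁻¹ 1 ⟨by positivity, hη₁.le⟩ (by simp)))]
  have hleft := norm_integral_betaIntegrand_le_left hδ₀ hc (inv_nonneg.2 hA.le) hη₁
  have hright := norm_integral_betaIntegrand_le_right hδ₀ hδ₁ hc (inv_pos.2 hA) hη₁
  have hA_le : A ≤ 3 * ‖c‖ := by linarith [abs_im_le_norm c]
  have hpow : A⁻¹ ^ (δ - 1) = A * A ^ (-δ) := by
    rw [Real.inv_rpow hA.le, ← Real.rpow_neg hA.le, neg_sub, Real.rpow_sub hA, Real.rpow_one,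
      Real.rpow_neg hA.le]
    field_simp
  rw [Real.inv_rpow hA.le, ← Real.rpow_neg hA.le] at hleft
  rw [hpow] at hright
  calc _ ≤ _ := norm_add_le _ _
    _ ≤ A ^ (-δ) / δ + 2 * (A * A ^ (-δ)) / ‖c‖ := add_le_add hleft hright
    _ ≤ A ^ (-δ) / δ + 6 / δ * A ^ (-δ) := by
      gcongr
      calc 2 * (A * A ^ (-δ)) / ‖c‖ ≤ 6 * A ^ (-δ) := by
            rw [div_le_iff₀ (by linarith)]; nlinarith [Real.rpow_nonneg hA.le (-δ)]
        _ ≤ 6 / δ * A ^ (-δ) := by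
            gcongr; rw [le_div_iff₀ hδ₀]; linarith
    _ = 7 / δ * A ^ (-δ) := by ring

lemma norm_Gamma_mul_Gamma_add_one_le (hδ₀ : 0 < δ) (hδ₁ : δ < 1) (hc : 1 ≤ c.re)
    (hc' : 1 / 2 ≤ |c.im|) :
    ‖Gamma c‖ * Real.Gamma (δ + 1) ≤ 7 * (1 + |c.im|) ^ (-δ) * ‖Gamma (c + δ)‖ := by
  have hbeta := congrArg norm (Gamma_mul_Gamma_eq_betaIntegral (s := c) (t := δ) (by linarith)
    (by simpa using hδ₀))
  rw [norm_mul, norm_mul, Gamma_ofReal, norm_real,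
    Real.norm_of_nonneg (Real.Gamma_pos_of_pos hδ₀).le] at hbeta
  rw [Real.Gamma_add_one hδ₀.ne', mul_left_comm, hbeta]
  calc δ * (‖Gamma (c + δ)‖ * ‖betaIntegral c δ‖)
      ≤ δ * (‖Gamma (c + δ)‖ * (7 / δ * (1 + |c.im|) ^ (-δ))) := by
        gcongr; exact norm_betaIntegral_le hδ₀ hδ₁ hc hc'
    _ = 7 * (1 + |c.im|) ^ (-δ) * ‖Gamma (c + δ)‖ := by field_simp

end Beta

-- `‖Γ(σ + iτ)‖` grows like `(1 + |τ|) ^ σ` in `σ`, so shifts of `σ` change this by bounded factors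
noncomputable def scaledNormGamma (τ σ : ℝ) : ℝ := ‖Gamma (σ + τ * I)‖ * (1 + |τ|) ^ (-σ)

section scaledNormGamma

variable {τ : ℝ}

lemma scaledNormGamma_nonneg (σ : ℝ) : 0 ≤ scaledNormGamma τ σ := by
  unfold scaledNormGamma; positivity

lemma scaledNormGamma_add_one_mul (hτ : τ ≠ 0) (σ : ℝ) :
    scaledNormGamma τ (σ + 1) * (1 + |τ|) = ‖(σ : ℂ) + τ * I‖ * scaledNormGamma τ σ := by
  have hw : (σ : ℂ) + τ * I ≠ 0 := fun h => hτ (by simpa using congrArg im h)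
  have hA : 0 < 1 + |τ| := by positivity
  unfold scaledNormGamma
  rw [show ((σ + 1 : ℝ) : ℂ) + τ * I = (σ + τ * I) + 1 by push_cast; ring, Gamma_add_one _ hw,
    norm_mul, show -σ = -(σ + 1) + 1 by ring, Real.rpow_add_one hA.ne']
  ring

lemma scaledNormGamma_le_three_mul (hτ : 1 / 2 ≤ |τ|) (σ : ℝ) :
    scaledNormGamma τ σ ≤ 3 * scaledNormGamma τ (σ + 1) := by
  have h := scaledNormGamma_add_one_mul (τ := τ) (by rintro rfl; norm_num at hτ) σ
  have hw : |τ| ≤ ‖(σ : ℂ) + τ * I‖ := by simpa using abs_im_le_norm ((σ : ℂ) + τ * I)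
  refine le_of_mul_le_mul_right ?_ (by positivity : 0 < 1 + |τ|)
  calc scaledNormGamma τ σ * (1 + |τ|) ≤ scaledNormGamma τ σ * (3 * ‖(σ : ℂ) + τ * I‖) := by
        gcongr
        · exact scaledNormGamma_nonneg σ
        · linarith
    _ = 3 * scaledNormGamma τ (σ + 1) * (1 + |τ|) := by rw [mul_assoc 3, h]; ring

lemma scaledNormGamma_le_pow_three_mul (hτ : 1 / 2 ≤ |τ|) (σ : ℝ) (n : ℕ) :
    scaledNormGamma τ σ ≤ 3 ^ n * scaledNormGamma τ (σ + n) := by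
  induction n with
  | zero => simp
  | succ n ih =>
    calc scaledNormGamma τ σ ≤ 3 ^ n * scaledNormGamma τ (σ + n) := ih
      _ ≤ 3 ^ n * (3 * scaledNormGamma τ (σ + n + 1)) := by
        gcongr; exact scaledNormGamma_le_three_mul hτ _
      _ = 3 ^ (n + 1) * scaledNormGamma τ (σ + ↑(n + 1)) := by push_cast; ring_nf

lemma scaledNormGamma_add_one_le (hτ : τ ≠ 0) (σ : ℝ) :
    scaledNormGamma τ (σ + 1) ≤ (|σ| + 1) * scaledNormGamma τ σ := by
  have h := scaledNormGamma_add_one_mul hτ σ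
  have hw : ‖(σ : ℂ) + τ * I‖ ≤ |σ| + |τ| := by
    simpa using norm_le_abs_re_add_abs_im ((σ : ℂ) + τ * I)
  have hA : 0 < 1 + |τ| := by positivity
  have hw' : ‖(σ : ℂ) + τ * I‖ ≤ (|σ| + 1) * (1 + |τ|) := by nlinarith [abs_nonneg σ, abs_nonneg τ]
  refine le_of_mul_le_mul_right ?_ hA
  rw [h, mul_right_comm]
  exact mul_le_mul_of_nonneg_right hw' (scaledNormGamma_nonneg σ)

lemma scaledNormGamma_add_nat_le (hτ : τ ≠ 0) (σ : ℝ) (n : ℕ) :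
    scaledNormGamma τ (σ + n) ≤ (|σ| + n) ^ n * scaledNormGamma τ σ := by
  induction n with
  | zero => simp
  | succ n ih =>
    calc scaledNormGamma τ (σ + ↑(n + 1)) = scaledNormGamma τ ((σ + n) + 1) := by push_cast; ring_nf
      _ ≤ (|σ + n| + 1) * scaledNormGamma τ (σ + n) := scaledNormGamma_add_one_le hτ _
      _ ≤ (|σ| + ↑(n + 1)) * ((|σ| + ↑(n + 1)) ^ n * scaledNormGamma τ σ) := by
        have hσn : |σ + n| + 1 ≤ |σ| + ↑(n + 1) := by
          push_cast; linarith [abs_add_le σ n, abs_of_nonneg (Nat.cast_nonneg (α := ℝ) n)]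
        refine mul_le_mul hσn (ih.trans ?_) (scaledNormGamma_nonneg _) (by positivity)
        gcongr
        · exact scaledNormGamma_nonneg σ
        · simp
      _ = (|σ| + ↑(n + 1)) ^ (n + 1) * scaledNormGamma τ σ := by ring

lemma exists_scaledNormGamma_le_mul_add :
    ∃ K > 0, ∀ τ : ℝ, 1 / 2 ≤ |τ| → ∀ σ δ : ℝ, 1 ≤ σ → 0 ≤ δ → δ < 1 →
      scaledNormGamma τ σ ≤ K * scaledNormGamma τ (σ + δ) := by
  obtain ⟨x₀, hx₀, hmin⟩ := Real.exists_isMinOn_Gamma_Ioi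
  have hm : 0 < Real.Gamma x₀ := Real.Gamma_pos_of_pos (by linarith [hx₀.1])
  have hmin' : ∀ x, 0 < x → Real.Gamma x₀ ≤ Real.Gamma x := fun x hx => isMinOn_iff.1 hmin x hx
  refine ⟨7 / Real.Gamma x₀, by positivity, fun τ hτ σ δ hσ hδ₀ hδ₁ => ?_⟩
  rcases hδ₀.eq_or_lt with rfl | hδ₀
  · have h1 : 1 ≤ 7 / Real.Gamma x₀ := by
      rw [le_div_iff₀ hm]; linarith [Real.Gamma_one ▸ hmin' 1 one_pos]
    simpa using le_mul_of_one_le_left (scaledNormGamma_nonneg σ) h1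
  have hre : ((σ : ℂ) + τ * I).re = σ := by simp
  have him : ((σ : ℂ) + τ * I).im = τ := by simp
  have hΓ := norm_Gamma_mul_Gamma_add_one_le hδ₀ hδ₁ (by rwa [hre]) (by rwa [him])
  rw [him] at hΓ
  have hA : 0 < 1 + |τ| := by positivity
  unfold scaledNormGamma
  rw [show ((σ + δ : ℝ) : ℂ) + τ * I = σ + τ * I + δ by push_cast; ring, neg_add,
    Real.rpow_add hA, div_mul_eq_mul_div, le_div_iff₀ hm]
  calc _ = ‖Gamma (σ + τ * I)‖ * Real.Gamma x₀ * (1 + |τ|) ^ (-σ) := by ring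
    _ ≤ ‖Gamma (σ + τ * I)‖ * Real.Gamma (δ + 1) * (1 + |τ|) ^ (-σ) := by
      gcongr; exact hmin' _ (by linarith)
    _ ≤ 7 * (1 + |τ|) ^ (-δ) * ‖Gamma (σ + τ * I + δ)‖ * (1 + |τ|) ^ (-σ) := by gcongr
    _ = _ := by ring

lemma exists_scaledNormGamma_le_mul (B : ℝ) :
    ∃ K > 0, ∀ τ : ℝ, 1 / 2 ≤ |τ| → ∀ σ σ' : ℝ, -B ≤ σ → σ ≤ σ' → σ' ≤ B →
      scaledNormGamma τ σ ≤ K * scaledNormGamma τ σ' := by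
  obtain ⟨K₀, hK₀, hfrac⟩ := exists_scaledNormGamma_le_mul_add
  set N := ⌈B⌉₊ + 1
  refine ⟨3 ^ N * K₀ * 3 ^ ⌊2 * B⌋₊ * (|B| + N) ^ N, by positivity,
    fun τ hτ σ σ' hσ hσσ' hσ' => ?_⟩
  have hτ₀ : τ ≠ 0 := by rintro rfl; norm_num at hτ
  set k := ⌊σ' - σ⌋₊
  have hk : (k : ℝ) ≤ σ' - σ := Nat.floor_le (by linarith)
  have hk' : σ' - σ < k + 1 := Nat.lt_floor_add_one _
  have hN : 1 ≤ σ + N := by have := Nat.le_ceil B; push_cast [N]; linarith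
  -- up `N` unit steps to real part `≥ 1`, one fractional step, up `k` unit steps to `σ' + N`,
  -- and down `N` unit steps to `σ'`
  calc scaledNormGamma τ σ ≤ 3 ^ N * scaledNormGamma τ (σ + N) :=
        scaledNormGamma_le_pow_three_mul hτ σ N
    _ ≤ 3 ^ N * (K₀ * scaledNormGamma τ (σ + N + (σ' - σ - k))) := by
        gcongr; exact hfrac τ hτ _ _ hN (by linarith) (by linarith)
    _ ≤ 3 ^ N * (K₀ * (3 ^ k * scaledNormGamma τ (σ + N + (σ' - σ - k) + k))) := by
        gcongr; exact scaledNormGamma_le_pow_three_mul hτ _ k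
    _ = 3 ^ N * K₀ * 3 ^ k * scaledNormGamma τ (σ' + N) := by ring_nf
    _ ≤ 3 ^ N * K₀ * 3 ^ k * ((|σ'| + N) ^ N * scaledNormGamma τ σ') := by
        gcongr; exact scaledNormGamma_add_nat_le hτ₀ σ' N
    _ ≤ 3 ^ N * K₀ * 3 ^ ⌊2 * B⌋₊ * ((|B| + N) ^ N * scaledNormGamma τ σ') := by
        have := scaledNormGamma_nonneg (τ := τ) σ'
        have hσB : |σ'| ≤ |B| := (abs_le.2 ⟨by linarith, hσ'⟩).trans (le_abs_self B)
        gcongr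
        · norm_num
        · exact Nat.floor_le_floor (by linarith)
    _ = _ := by ring

end scaledNormGamma

lemma exists_norm_Gamma_le_mul_rpow (B : ℝ) :
    ∃ K > 0, ∀ τ : ℝ, 1 / 2 ≤ |τ| → ∀ σ σ' : ℝ, -B ≤ σ → σ ≤ σ' → σ' ≤ B →
      ‖Gamma (σ + τ * I)‖ ≤ K * (1 + |τ|) ^ (σ - σ') * ‖Gamma (σ' + τ * I)‖ := by
  obtain ⟨K, hK, h⟩ := exists_scaledNormGamma_le_mul B
  refine ⟨K, hK, fun τ hτ σ σ' hσ hσσ' hσ' => ?_⟩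
  have hA : 0 < 1 + |τ| := by positivity
  rw [← mul_le_mul_iff_of_pos_right (Real.rpow_pos_of_pos hA (-σ))]
  calc _ ≤ K * (‖Gamma (σ' + τ * I)‖ * (1 + |τ|) ^ (-σ')) := h τ hτ σ σ' hσ hσσ' hσ'
    _ = _ := by
      rw [Real.rpow_sub hA, Real.rpow_neg hA.le, Real.rpow_neg hA.le]
      field_simp

lemma norm_sin_le_cosh_im (w : ℂ) : ‖sin w‖ ≤ Real.cosh w.im := by
  rw [sin, Real.cosh_eq, norm_div, norm_mul, norm_I, mul_one, RCLike.norm_ofNat]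
  gcongr
  refine (norm_sub_le _ _).trans (le_of_eq ?_)
  simp [norm_exp]

lemma norm_Gamma_one_half_add_sq (τ : ℝ) :
    ‖Gamma (1 / 2 + τ * I)‖ ^ 2 = π / Real.cosh (π * τ) := by
  have h := Gamma_mul_Gamma_one_sub (1 / 2 + τ * I)
  rw [show 1 - (1 / 2 + τ * I) = (starRingEnd ℂ) (1 / 2 + τ * I) by
      apply Complex.ext <;> simp; norm_num,
    Gamma_conj, mul_conj, mul_add, mul_one_div, sin_add, sin_pi_div_two, cos_pi_div_two, one_mul,
    zero_mul, add_zero, ← mul_assoc, cos_mul_I, ← ofReal_mul, ← ofReal_cosh, ← ofReal_div,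
    normSq_eq_norm_sq] at h
  exact_mod_cast h

lemma norm_Gamma_one_half_add_mul_cosh_le (τ : ℝ) :
    ‖Gamma (1 / 2 + τ * I)‖ * Real.cosh (π * τ / 2) ≤ √π := by
  have hsq : Real.cosh (π * τ / 2) ^ 2 ≤ Real.cosh (π * τ) := by
    have := Real.cosh_two_mul (π * τ / 2)
    rw [show 2 * (π * τ / 2) = π * τ by ring] at this
    nlinarith [Real.one_le_cosh (π * τ / 2), Real.cosh_sq (π * τ / 2)]
  rw [← Real.sqrt_sq (by positivity : 0 ≤ ‖Gamma (1 / 2 + τ * I)‖ * Real.cosh (π * τ / 2))]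
  gcongr
  rw [mul_pow, norm_Gamma_one_half_add_sq, div_mul_eq_mul_div, div_le_iff₀ (Real.cosh_pos _)]
  gcongr

lemma exists_norm_Gamma_neg_sub_three_mul_sin_le (C : ℝ) :
    ∃ K > 0, ∀ z : ℂ, -7 / 2 ≤ z.re → z.re ≤ C → 1 / 2 ≤ |z.im| →
      ‖Gamma (-z - 3) * sin (π * z / 2)‖ ≤ K * (|z.im| + 1) ^ (-z.re - 7 / 2) := by
  obtain ⟨K, hK, h⟩ := exists_norm_Gamma_le_mul_rpow (|C| + 4)
  refine ⟨K * √π, by positivity, fun z hz hzC hy => ?_⟩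
  have hΓ := h (-z.im) (by rwa [abs_neg]) (-z.re - 3) (1 / 2) (by linarith [le_abs_self C])
    (by linarith) (by linarith [abs_nonneg C])
  have hz : -z - 3 = ((-z.re - 3 : ℝ) : ℂ) + (-z.im : ℝ) * I := by
    apply Complex.ext <;> simp
  have hsin : ‖sin (π * z / 2)‖ ≤ Real.cosh (π * (-z.im) / 2) := by
    simpa [mul_div_assoc, ← Real.cosh_neg (π * z.im / 2), neg_div] using
      norm_sin_le_cosh_im (π * z / 2)
  have hhalf := norm_Gamma_one_half_add_mul_cosh_le (-z.im)
  push_cast at hΓ hhalf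
  rw [abs_neg] at hΓ
  rw [norm_mul, hz]
  push_cast
  calc _ ≤ K * (1 + |z.im|) ^ (-z.re - 3 - 1 / 2) * ‖Gamma (1 / 2 + -↑z.im * I)‖ *
        Real.cosh (π * (-z.im) / 2) := mul_le_mul hΓ hsin (norm_nonneg _) (by positivity)
    _ ≤ K * (1 + |z.im|) ^ (-z.re - 3 - 1 / 2) * √π := by
      rw [mul_assoc]; gcongr
    _ = _ := by ring_nf

theorem Mform_bound_general (C : ℝ) :
    ∃ K : ℝ, 0 < K ∧ ∀ lam : ℝ, 0 < lam → ∀ z : ℂ,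
      -3 < z.re → z.re ≤ C → 1 ≤ |z.im| →
        ‖Mform lam z‖ ≤ K * lam ^ z.re * (|z.im| + 1) ^ (-z.re - 7 / 2) := by
  obtain ⟨K, hK, hΓsin⟩ := exists_norm_Gamma_neg_sub_three_mul_sin_le C
  refine ⟨120 * K / π, by positivity, fun lam hlam z hz hzC hy => ?_⟩
  have hnorm : ‖Mform lam z‖ = 2 * lam ^ z.re / π * ‖Gamma (-z - 3) * sin (π * z / 2)‖ *
      ‖(12 : ℂ) - 6 * 2 ^ (-z)‖ := by
    rw [Mform, mul_assoc _ (Gamma _), norm_mul, norm_mul, norm_div, norm_mul,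
      norm_cpow_eq_rpow_re_of_pos hlam]
    simp [abs_of_pos Real.pi_pos]
  have hpow : ‖(2 : ℂ) ^ (-z)‖ ≤ 8 := by
    rw [show (2 : ℂ) = ((2 : ℕ) : ℂ) by norm_num, norm_natCast_cpow_of_pos two_pos]
    calc _ ≤ ((2 : ℕ) : ℝ) ^ (3 : ℝ) :=
          Real.rpow_le_rpow_of_exponent_le (by norm_num) (by simp; linarith)
      _ = 8 := by norm_num
  have hfactor : ‖(12 : ℂ) - 6 * 2 ^ (-z)‖ ≤ 60 := by
    calc _ ≤ ‖(12 : ℂ)‖ + ‖6 * (2 : ℂ) ^ (-z)‖ := norm_sub_le _ _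
      _ ≤ 60 := by rw [norm_mul]; norm_num; linarith
  calc ‖Mform lam z‖ ≤ 2 * lam ^ z.re / π * (K * (|z.im| + 1) ^ (-z.re - 7 / 2)) * 60 := by
        rw [hnorm]; gcongr; exact hΓsin z (by linarith) hzC (by linarith)
    _ = _ := by ring

/-- For every `C > -3` there is `K > 0` such that for all `λ > 0` and all `z = x + iy`
with `-3 < x ≤ C` and `|y| ≥ 1`, one has `|M^λ(z)| ≤ K λ^x (|y|+1)^{-x-7/2}`. -/
theorem Mform_bound (C : ℝ) (hC : -3 < C) :
    ∃ K : ℝ, 0 < K ∧ ∀ lam : ℝ, 0 < lam → ∀ z : ℂ,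
      -3 < z.re → z.re ≤ C → 1 ≤ |z.im| →
        ‖Mform lam z‖ ≤ K * lam ^ z.re * (|z.im| + 1) ^ (-z.re - 7 / 2) :=
  Mform_bound_general C
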